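/- Let Z be a stability function on 𝒯ₙ. Then at most one stable object (up to isomorphism) has dimension vector δ = (1, 1, …, 1). -/

import Mathlib

/-!
Choose a vector `v i` spanning each one-dimensional graded piece, so that
`t (v i) = c i • v (i - 1)`; nilpotency of `t` forces `c a = 0` for some vertex `a`, and then
every arc of the cycle starting at `a` and running upward spans a subrepresentation. If stable
`M` and `N` had such zeros at vertices `a ≠ b`, the arc `[a, b)` in `M` and the complementary
arc `[b, a)` in `N` would be proper nonzero subobjects whose classes add up to `δ`, both of
phase smaller than that of `δ`; this is impossible, since the phase of a sum of two effective
classes is at most the larger of their phases. So `c` vanishes at exactly one vertex `a`, the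
same for `M` and `N`, and rescaling the basis along the path down from `a - 1` turns both into
the representation in which `t` maps each basis vector to the next one and kills the one at `a`.
-/

/-- A finite-dimensional nilpotent representation of the cyclic quiver `Δₙ`
(equivalently an object of `𝒯ₙ`): a finite-dimensional `k`-vector space with an internal
grading by `ZMod n` and a nilpotent linear endomorphism mapping the piece at vertex `i`
into the piece at vertex `i - 1`. -/
structure NilpRep (k : Type) [Field k] (n : ℕ) [NeZero n] where
  carrier : Type
  [acg : AddCommGroup carrier]
  [mod : Module k carrier]
  [fin : FiniteDimensional k carrier]
  grading : ZMod n → Submodule k carrier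
  t : carrier →ₗ[k] carrier
  indep : ∀ i : ZMod n, Disjoint (grading i) (⨆ j, ⨆ (_ : j ≠ i), grading j)
  total : (⨆ i, grading i) = ⊤
  maps : ∀ i, (grading i).map t ≤ grading (i - 1)
  nilpotent : ∃ N : ℕ, t ^ N = 0

attribute [instance] NilpRep.acg NilpRep.mod NilpRep.fin

variable {k : Type} [Field k] {n : ℕ} [NeZero n]

namespace NilpRep

/-- The dimension vector of a nilpotent representation, i.e. its class in `K₀(𝒯ₙ) ≅ ℤⁿ`. -/
noncomputable def dim (M : NilpRep k n) : ZMod n → ℤ := fun i => (Module.finrank k (M.grading i) : ℤ)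

/-- The length of an object of `𝒯ₙ`, which equals its total dimension. -/
noncomputable def length (M : NilpRep k n) : ℕ := Module.finrank k M.carrier

/-- A subrepresentation: a `t`-invariant homogeneous subspace. -/
def IsSubRep (M : NilpRep k n) (U : Submodule k M.carrier) : Prop :=
  U.map M.t ≤ U ∧ (⨆ i : ZMod n, (M.grading i ⊓ U)) = U

/-- The dimension vector of a subrepresentation. -/
noncomputable def subDim (M : NilpRep k n) (U : Submodule k M.carrier) : ZMod n → ℤ :=
  fun i => (Module.finrank k ↥(M.grading i ⊓ U) : ℤ)

/-- Isomorphism of nilpotent representations. -/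
def RepIso (M N : NilpRep k n) : Prop :=
  ∃ e : M.carrier ≃ₗ[k] N.carrier,
    (∀ x, e (M.t x) = N.t (e x)) ∧
    ∀ i, (M.grading i).map (e : M.carrier →ₗ[k] N.carrier) = N.grading i

/-- Indecomposability of a nonzero representation. -/
def Indec (M : NilpRep k n) : Prop :=
  M.dim ≠ 0 ∧ ∀ U V : Submodule k M.carrier, M.IsSubRep U → M.IsSubRep V →
    U ⊓ V = ⊥ → U ⊔ V = ⊤ → U = ⊥ ∨ V = ⊥

end NilpRep

/-- A stability function on `𝒯ₙ`, given on the Grothendieck group `K₀(𝒯ₙ) ≅ ℤⁿ`: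
additive, and nonzero with argument in `[0, π)` on every nonzero effective class
(i.e. on the class of every nonzero object). -/
def IsStabilityFunction (n : ℕ) [NeZero n] (Z : (ZMod n → ℤ) → ℂ) : Prop :=
  (∀ d e, Z (d + e) = Z d + Z e) ∧
  ∀ d : ZMod n → ℤ, (∀ i, 0 ≤ d i) → d ≠ 0 →
    Z d ≠ 0 ∧ 0 ≤ (Z d).arg ∧ (Z d).arg < Real.pi

/-- An object is `Z`-stable if it is nonzero and every nonzero proper subrepresentation
has strictly smaller phase. -/
def IsStable (Z : (ZMod n → ℤ) → ℂ) (M : NilpRep k n) : Prop :=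
  M.dim ≠ 0 ∧ ∀ U : Submodule k M.carrier, M.IsSubRep U → U ≠ ⊥ → U ≠ ⊤ →
    (Z (M.subDim U)).arg < (Z M.dim).arg

/-- An object is `Z`-semistable if it is nonzero and every nonzero proper
subrepresentation has phase at most that of the object. -/
def IsSemistable (Z : (ZMod n → ℤ) → ℂ) (M : NilpRep k n) : Prop :=
  M.dim ≠ 0 ∧ ∀ U : Submodule k M.carrier, M.IsSubRep U → U ≠ ⊥ → U ≠ ⊤ →
    (Z (M.subDim U)).arg ≤ (Z M.dim).arg

/-- A stability function is discrete if distinct (non-isomorphic) stable objects have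
distinct phases. -/
def IsDiscreteStability (k : Type) [Field k] {n : ℕ} [NeZero n] (Z : (ZMod n → ℤ) → ℂ) : Prop :=
  ∀ M N : NilpRep k n, IsStable Z M → IsStable Z N →
    (Z M.dim).arg = (Z N.dim).arg → NilpRep.RepIso M N

open Submodule Module Finset

lemma ZMod.val_sub_one_add_one {y : ZMod n} (hy : y ≠ 0) : (y - 1).val + 1 = y.val := by
  have hpos : 0 < y.val := ZMod.val_pos.2 hy
  have hcast : y - 1 = ((y.val - 1 : ℕ) : ZMod n) := by
    rw [Nat.cast_sub hpos, ZMod.natCast_zmod_val, Nat.cast_one]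
  rw [hcast, ZMod.val_cast_of_lt (by have := y.val_lt; omega)]
  omega

lemma Complex.im_mul_cos_sub_re_mul_sin (u : ℂ) (θ : ℝ) :
    u.im * Real.cos θ - u.re * Real.sin θ = ‖u‖ * Real.sin (u.arg - θ) := by
  rw [Real.sin_sub, ← norm_mul_cos_arg, ← norm_mul_sin_arg]
  ring

lemma Complex.arg_add_le_max {z w : ℂ} (hz : 0 ≤ z.arg) (hw : 0 ≤ w.arg)
    (hzw : (z + w).arg < Real.pi) : (z + w).arg ≤ max z.arg w.arg := by
  by_contra! h
  have hz0 : z ≠ 0 := by rintro rfl; simp at h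
  have hw0 : w ≠ 0 := by rintro rfl; simp at h
  set θ := (z + w).arg
  -- the component orthogonal to the ray of argument `θ` is negative for `z` and `w`
  have key : ∀ u : ℂ, u ≠ 0 → 0 ≤ u.arg → u.arg < θ →
      u.im * Real.cos θ - u.re * Real.sin θ < 0 := fun u hu h0 hlt => by
    rw [im_mul_cos_sub_re_mul_sin]
    exact mul_neg_of_pos_of_neg (norm_pos_iff.2 hu)
      (Real.sin_neg_of_neg_of_neg_pi_lt (by linarith) (by linarith))
  have hsum : (z + w).im * Real.cos θ - (z + w).re * Real.sin θ = 0 := by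
    rw [im_mul_cos_sub_re_mul_sin, sub_self, Real.sin_zero, mul_zero]
  have := key z hz0 hz ((le_max_left _ _).trans_lt h)
  have := key w hw0 hw ((le_max_right _ _).trans_lt h)
  simp only [add_im, add_re] at hsum
  linarith

namespace IsStabilityFunction

variable {Z : (ZMod n → ℤ) → ℂ}

lemma map_zero (hZ : IsStabilityFunction n Z) : Z 0 = 0 := by
  simpa using hZ.1 0 0

lemma arg_nonneg_and_lt_pi (hZ : IsStabilityFunction n Z) {d : ZMod n → ℤ} (hd : 0 ≤ d) :
    0 ≤ (Z d).arg ∧ (Z d).arg < Real.pi := by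
  rcases eq_or_ne d 0 with rfl | hd0
  · simp [hZ.map_zero, Real.pi_pos]
  · exact (hZ.2 d hd hd0).2

lemma arg_add_le_max (hZ : IsStabilityFunction n Z) {d e : ZMod n → ℤ} (hd : 0 ≤ d)
    (he : 0 ≤ e) : (Z (d + e)).arg ≤ max (Z d).arg (Z e).arg := by
  have hde := hZ.arg_nonneg_and_lt_pi (add_nonneg hd he)
  rw [hZ.1] at hde ⊢
  exact Complex.arg_add_le_max (hZ.arg_nonneg_and_lt_pi hd).1 (hZ.arg_nonneg_and_lt_pi he).1 hde.2

end IsStabilityFunction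

namespace NilpRep

variable (M : NilpRep k n)

lemma subDim_bot : M.subDim ⊥ = 0 := by
  funext i
  simp [subDim]

lemma subDim_top : M.subDim ⊤ = M.dim := by
  funext i
  rw [subDim, inf_top_eq]
  rfl

lemma disjoint_grading_iSup_grading {S : Set (ZMod n)} {i : ZMod n} (hi : i ∉ S) :
    Disjoint (M.grading i) (⨆ x ∈ S, M.grading x) :=
  (M.indep i).mono_right <|
    iSup₂_le fun x hx => le_iSup₂_of_le (f := fun j (_ : j ≠ i) => M.grading j) x
      (ne_of_mem_of_not_mem hx hi) le_rfl

lemma isSubRep_iSup_grading (S : Set (ZMod n))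
    (hS : ∀ x ∈ S, x - 1 ∉ S → (M.grading x).map M.t = ⊥) :
    M.IsSubRep (⨆ x ∈ S, M.grading x) := by
  refine ⟨map_le_iff_le_comap.2 <| iSup₂_le fun x hx => map_le_iff_le_comap.1 ?_, ?_⟩
  · by_cases hx1 : x - 1 ∈ S
    · exact (M.maps x).trans (le_biSup _ hx1)
    · rw [hS x hx hx1]
      exact bot_le
  · refine le_antisymm (iSup_le fun i => inf_le_right) ?_
    exact iSup₂_le fun x hx => le_iSup_of_le x (le_inf le_rfl (le_biSup _ hx))

lemma subDim_iSup_grading (S : Set (ZMod n)) :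
    M.subDim (⨆ x ∈ S, M.grading x) = S.indicator M.dim := by
  funext i
  by_cases hi : i ∈ S
  · rw [Set.indicator_of_mem hi, subDim, inf_eq_left.2 (le_biSup _ hi)]
    rfl
  · rw [Set.indicator_of_notMem hi, subDim, (M.disjoint_grading_iSup_grading hi).eq_bot,
      finrank_bot, Nat.cast_zero]

end NilpRep

section Stability

variable {Z : (ZMod n → ℤ) → ℂ} {M N : NilpRep k n}

lemma IsStable.arg_subDim_lt (hM : IsStable Z M) {U : Submodule k M.carrier}
    (hU : M.IsSubRep U) (h0 : M.subDim U ≠ 0) (htop : M.subDim U ≠ M.dim) :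
    (Z (M.subDim U)).arg < (Z M.dim).arg :=
  hM.2 U hU (by rintro rfl; exact h0 M.subDim_bot) (by rintro rfl; exact htop M.subDim_top)

lemma IsStable.arg_indicator_lt (hM : IsStable Z M) (hMd : M.dim = 1) {S : Set (ZMod n)}
    (hS : ∀ x ∈ S, x - 1 ∉ S → (M.grading x).map M.t = ⊥) {a b : ZMod n} (ha : a ∈ S)
    (hb : b ∉ S) : (Z (S.indicator 1)).arg < (Z 1).arg := by
  have hdim : M.subDim (⨆ x ∈ S, M.grading x) = S.indicator 1 := by
    rw [M.subDim_iSup_grading, hMd]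
  have hlt := hM.arg_subDim_lt (M.isSubRep_iSup_grading S hS)
    (by rw [hdim]; exact fun h => by simpa [ha] using congrFun h a)
    (by rw [hdim, hMd]; exact fun h => by simpa [hb] using congrFun h b)
  rwa [hdim, hMd] at hlt

theorem eq_of_isStable_of_map_t_eq_bot (hZ : IsStabilityFunction n Z) (hM : IsStable Z M)
    (hN : IsStable Z N) (hMd : M.dim = 1) (hNd : N.dim = 1) {a b : ZMod n}
    (ha : (M.grading a).map M.t = ⊥) (hb : (N.grading b).map N.t = ⊥) : a = b := by
  by_contra hab
  set S : Set (ZMod n) := {x | (x - a).val < (b - a).val}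
  have hd : 0 < (b - a).val := ZMod.val_pos.2 (sub_ne_zero.2 (Ne.symm hab))
  have haS : a ∈ S := by simpa [S] using hd
  have hbS : b ∉ S := by simp [S]
  have hSM : ∀ x ∈ S, x - 1 ∉ S → (M.grading x).map M.t = ⊥ := by
    intro x hx hx1
    obtain rfl : x = a := by
      by_contra hxa
      have := ZMod.val_sub_one_add_one (sub_ne_zero.2 hxa)
      simp only [S, Set.mem_ofPred_eq, sub_right_comm x 1 a] at hx hx1
      omega
    exact ha
  have hSN : ∀ x ∈ Sᶜ, x - 1 ∉ Sᶜ → (N.grading x).map N.t = ⊥ := by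
    intro x hx hx1
    simp only [S, Set.mem_compl_iff, Set.mem_ofPred_eq, not_lt,
      sub_right_comm x 1 a] at hx hx1
    obtain rfl : x = b := by
      have hxa : x - a ≠ 0 := fun h => by rw [h, ZMod.val_zero] at hx; omega
      have := ZMod.val_sub_one_add_one hxa
      have hval : (x - a).val = (b - a).val := by omega
      exact sub_left_injective (ZMod.val_injective n hval)
    exact hb
  have hlt := max_lt (hM.arg_indicator_lt hMd hSM haS hbS)
    (hN.arg_indicator_lt hNd hSN hbS (not_not.2 haS))
  have hle := hZ.arg_add_le_max (d := S.indicator 1) (e := Sᶜ.indicator 1)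
    (Set.indicator_nonneg fun _ _ => zero_le_one) (Set.indicator_nonneg fun _ _ => zero_le_one)
  rw [Set.indicator_self_add_compl] at hle
  exact hle.not_gt hlt

end Stability

namespace NilpRep

structure ThinBasis (M : NilpRep k n) where
  vec : ZMod n → M.carrier
  coeff : ZMod n → k
  vec_ne_zero : ∀ i, vec i ≠ 0
  grading_eq_span : ∀ i, M.grading i = span k {vec i}
  t_vec : ∀ i, M.t (vec i) = coeff i • vec (i - 1)

variable {M N : NilpRep k n}

lemma nonempty_thinBasis (hM : M.dim = 1) : Nonempty M.ThinBasis := by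
  have hrank (i : ZMod n) : finrank k (M.grading i) = 1 := by
    simpa [dim] using congrFun hM i
  have hgen (i : ZMod n) : ∃ v, v ≠ 0 ∧ M.grading i = span k {v} := by
    have : Nontrivial (M.grading i) := nontrivial_of_finrank_eq_succ (hrank i)
    obtain ⟨u, hu⟩ := exists_ne (0 : M.grading i)
    exact ⟨u, by simpa using hu, eq_span_singleton_of_mem_of_finrank_eq_one (hrank i) u.2
      (by simpa using hu)⟩
  choose v hv0 hv using hgen
  have hcoeff (i : ZMod n) : ∃ c : k, c • v (i - 1) = M.t (v i) := by
    rw [← mem_span_singleton, ← hv]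
    exact M.maps i (mem_map_of_mem (hv i ▸ mem_span_singleton_self (v i)))
  choose c hc using hcoeff
  exact ⟨⟨v, c, hv0, hv, fun i => (hc i).symm⟩⟩

namespace ThinBasis

lemma pow_t_vec (B : M.ThinBasis) (m : ℕ) (x : ZMod n) :
    (M.t ^ m) (B.vec x) = (∏ l ∈ range m, B.coeff (x - l)) • B.vec (x - m) := by
  induction m with
  | zero => simp
  | succ m ih =>
    rw [pow_succ', Module.End.mul_apply, ih, map_smul, B.t_vec, smul_smul, prod_range_succ,
      Nat.cast_succ, sub_sub]

lemma exists_coeff_eq_zero (B : M.ThinBasis) : ∃ a, B.coeff a = 0 := by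
  obtain ⟨m, hm⟩ := M.nilpotent
  have h := B.pow_t_vec m 0
  rw [hm, LinearMap.zero_apply, eq_comm, smul_eq_zero] at h
  obtain ⟨l, -, hl⟩ := prod_eq_zero_iff.1 (h.resolve_right (B.vec_ne_zero _))
  exact ⟨_, hl⟩

lemma map_t_eq_bot_iff (B : M.ThinBasis) (x : ZMod n) :
    (M.grading x).map M.t = ⊥ ↔ B.coeff x = 0 := by
  rw [B.grading_eq_span, map_span, Set.image_singleton, B.t_vec, span_singleton_eq_bot,
    smul_eq_zero, or_iff_left (B.vec_ne_zero _)]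

lemma exists_coeff_eq_ite (B : M.ThinBasis) {a : ZMod n} (ha : B.coeff a = 0)
    (hne : ∀ x, x ≠ a → B.coeff x ≠ 0) :
    ∃ B' : M.ThinBasis, B'.coeff = fun i => if i = a then 0 else 1 := by
  set m : ZMod n → ℕ := fun i => (a - 1 - i).val
  set P : ZMod n → k := fun i => ∏ l ∈ range (m i), B.coeff (a - 1 - l)
  have hpow (i : ZMod n) : (M.t ^ m i) (B.vec (a - 1)) = P i • B.vec i := by
    rw [B.pow_t_vec, ZMod.natCast_zmod_val, sub_sub_cancel]
  have hP (i : ZMod n) : P i ≠ 0 := by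
    refine prod_ne_zero_iff.2 fun l hl => hne _ fun h => ?_
    have hlm : l < m i := mem_range.1 hl
    have hmn : m i < n := ZMod.val_lt _
    have hdvd : ((l + 1 : ℕ) : ZMod n) = 0 := by
      push_cast
      linear_combination -h
    rw [ZMod.natCast_eq_zero_iff] at hdvd
    exact absurd (Nat.le_of_dvd (by omega) hdvd) (by omega)
  have hm (i : ZMod n) (hi : i ≠ a) : m (i - 1) = m i + 1 := by
    simp only [m, sub_sub_sub_cancel_right, sub_right_comm a 1 i]
    exact (ZMod.val_sub_one_add_one (sub_ne_zero.2 (Ne.symm hi))).symm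
  refine ⟨⟨fun i => P i • B.vec i, fun i => if i = a then 0 else 1,
    fun i => smul_ne_zero (hP i) (B.vec_ne_zero i),
    fun i => (B.grading_eq_span i).trans (span_singleton_smul_eq (IsUnit.mk0 _ (hP i)) _).symm,
    fun i => ?_⟩, rfl⟩
  by_cases hi : i = a
  · rw [if_pos hi, hi, map_smul, B.t_vec, ha, zero_smul, smul_zero, zero_smul]
  · rw [if_neg hi, one_smul, ← hpow, ← hpow, ← Module.End.mul_apply, ← pow_succ', hm i hi]

noncomputable def toBasis (B : M.ThinBasis) : Basis (ZMod n) k M.carrier :=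
  Basis.mk (iSupIndep.linearIndependent M.grading M.indep
      (fun i => (B.grading_eq_span i).symm ▸ mem_span_singleton_self _) B.vec_ne_zero)
    (M.total ▸ iSup_le fun i => (B.grading_eq_span i).trans_le
      (span_mono (Set.singleton_subset_iff.2 ⟨i, rfl⟩)))

@[simp]
lemma toBasis_apply (B : M.ThinBasis) (i : ZMod n) : B.toBasis i = B.vec i :=
  Basis.mk_apply _ _ _

lemma repIso_of_coeff_eq (B : M.ThinBasis) (C : N.ThinBasis) (h : B.coeff = C.coeff) :
    RepIso M N := by
  set e := B.toBasis.equiv C.toBasis (Equiv.refl _)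
  have he (i : ZMod n) : e (B.vec i) = C.vec i := by
    rw [← B.toBasis_apply, ← C.toBasis_apply]
    exact Basis.equiv_apply _ _ _ _
  have het : e.toLinearMap ∘ₗ M.t = N.t ∘ₗ e.toLinearMap :=
    B.toBasis.ext fun i => by simp [B.t_vec, C.t_vec, he, h]
  refine ⟨e, LinearMap.congr_fun het, fun i => ?_⟩
  rw [B.grading_eq_span, map_span, Set.image_singleton, LinearEquiv.coe_coe, he,
    C.grading_eq_span]

end ThinBasis

end NilpRep

/-- For any stability function `Z` on `𝒯ₙ`, at most one stable object (up to
isomorphism) has dimension vector `δ = (1,…,1)`. -/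
theorem stmt_7 (k : Type) [Field k] (n : ℕ) [NeZero n]
    (Z : (ZMod n → ℤ) → ℂ) (hZ : IsStabilityFunction n Z) :
    ∀ M N : NilpRep k n, IsStable Z M → IsStable Z N →
      M.dim = (fun _ => 1) → N.dim = (fun _ => 1) → NilpRep.RepIso M N := by
  intro M N hM hN hMd hNd
  obtain ⟨B⟩ := NilpRep.nonempty_thinBasis hMd
  obtain ⟨C⟩ := NilpRep.nonempty_thinBasis hNd
  obtain ⟨a, ha⟩ := B.exists_coeff_eq_zero
  obtain ⟨b, hb⟩ := C.exists_coeff_eq_zero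
  have huniq {P : NilpRep k n} (hP : IsStable Z P) (hPd : P.dim = 1) (D : P.ThinBasis)
      (x : ZMod n) (hx : D.coeff x = 0) : x = a :=
    eq_of_isStable_of_map_t_eq_bot hZ hP hM hPd hMd ((D.map_t_eq_bot_iff x).2 hx)
      ((B.map_t_eq_bot_iff a).2 ha)
  obtain rfl := huniq hN hNd C b hb
  obtain ⟨B', hB'⟩ := B.exists_coeff_eq_ite ha fun x hx h => hx (huniq hM hMd B x h)
  obtain ⟨C', hC'⟩ := C.exists_coeff_eq_ite hb fun x hx h => hx (huniq hN hNd C x h)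
  exact B'.repIso_of_coeff_eq C' (hB'.trans hC'.symm)
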